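/- Let M be a MAG over a finite vertex set, and let X and Y be distinct non-adjacent vertices of M. Then X and Y are m-separated by some subset of MB(Y) \ {X}. (Case 1 in Scenario 2 of the proof of Theorem 4: necessity of rule R2(i).) -/

import Mathlib

namespace CausalGraph

/-- A directed mixed graph: directed edges `dir a b` (a → b) and bidirected
edges `bidir a b` (a ↔ b), with at most one edge between any two vertices
and no self-loops. -/
structure MixedGraph (V : Type*) where
  dir : V → V → Prop
  bidir : V → V → Prop
  bidir_symm : ∀ a b, bidir a b → bidir b a
  dir_irrefl : ∀ a, ¬ dir a a
  bidir_irrefl : ∀ a, ¬ bidir a a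
  dir_not_dir : ∀ a b, dir a b → ¬ dir b a
  dir_not_bidir : ∀ a b, dir a b → ¬ bidir a b

variable {V : Type*}

/-- Two vertices are adjacent if there is an edge (of any kind) between them. -/
def MixedGraph.adj (G : MixedGraph V) (a b : V) : Prop :=
  G.dir a b ∨ G.dir b a ∨ G.bidir a b

/-- There is an edge between `a` and `b` with an arrowhead at `b`. -/
def ArrowInto (G : MixedGraph V) (a b : V) : Prop :=
  G.dir a b ∨ G.bidir a b

/-- `p` is a path between `a` and `b`: a list of distinct vertices, each
consecutive pair adjacent, starting at `a` and ending at `b`. -/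
def IsPathBetween (G : MixedGraph V) (p : List V) (a b : V) : Prop :=
  List.Chain' G.adj p ∧ p.Nodup ∧ p.head? = some a ∧ p.getLast? = some b ∧ 2 ≤ p.length

/-- `p` is a directed path from `a` to `b`: all edges are directed edges
pointing toward `b`. -/
def IsDirectedPath (G : MixedGraph V) (p : List V) (a b : V) : Prop :=
  List.Chain' G.dir p ∧ p.Nodup ∧ p.head? = some a ∧ p.getLast? = some b ∧ 2 ≤ p.length

/-- `a` is an ancestor of `b` (and `b` a descendant of `a`): `a = b` or there
is a directed path from `a` to `b`. -/
def Ancestor (G : MixedGraph V) (a b : V) : Prop :=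
  a = b ∨ ∃ p, IsDirectedPath G p a b

/-- `w` is an intermediate (non-endpoint) vertex of the path `p`. -/
def IsIntermediateOn (p : List V) (w : V) : Prop :=
  ∃ (u v : V) (l₁ l₂ : List V), p = l₁ ++ u :: w :: v :: l₂

/-- `w` is a collider on the path `p`: both edges of the path at `w` have an
arrowhead at `w`. -/
def IsColliderOn (G : MixedGraph V) (p : List V) (w : V) : Prop :=
  ∃ (u v : V) (l₁ l₂ : List V), p = l₁ ++ u :: w :: v :: l₂ ∧
    ArrowInto G u w ∧ ArrowInto G v w

/-- `w` is a non-collider intermediate vertex on the path `p`. -/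
def IsNonColliderOn (G : MixedGraph V) (p : List V) (w : V) : Prop :=
  IsIntermediateOn p w ∧ ¬ IsColliderOn G p w

/-- The path `p` between `a` and `b` (with `a, b ∉ Z`) is m-connecting given
`Z`: every non-collider on it is not in `Z`, and every collider on it has a
descendant in `Z`. -/
def MConnPath (G : MixedGraph V) (Z : Set V) (p : List V) (a b : V) : Prop :=
  IsPathBetween G p a b ∧ a ∉ Z ∧ b ∉ Z ∧
    (∀ w, IsNonColliderOn G p w → w ∉ Z) ∧
    (∀ w, IsColliderOn G p w → ∃ d ∈ Z, Ancestor G w d)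

/-- `a` and `b` are m-separated by `Z`: no path between them is m-connecting
given `Z`. -/
def MSep (G : MixedGraph V) (Z : Set V) (a b : V) : Prop :=
  ∀ p, ¬ MConnPath G Z p a b

/-- `a` and `b` are m-connected given `Z`. -/
def MConn (G : MixedGraph V) (Z : Set V) (a b : V) : Prop :=
  ∃ p, MConnPath G Z p a b

/-- Set version of m-separation: every vertex of `A` is m-separated from every
vertex of `B` by `Z`. -/
def MSepSets (G : MixedGraph V) (Z A B : Set V) : Prop :=
  ∀ a ∈ A, ∀ b ∈ B, MSep G Z a b

/-- `G` is a maximal ancestral graph (MAG): it is ancestral (no directed or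
almost directed cycles), and every pair of distinct non-adjacent vertices is
m-separated by some set of vertices. -/
def IsMAG (G : MixedGraph V) : Prop :=
  (∀ a b, G.dir a b → ¬ Ancestor G b a) ∧
  (∀ a b, G.bidir a b → ¬ Ancestor G a b) ∧
  (∀ a b, a ≠ b → ¬ G.adj a b → ∃ Z : Set V, a ∉ Z ∧ b ∉ Z ∧ MSep G Z a b)

/-- `p` is a collider path between `a` and `b`: every intermediate vertex is a
collider on it. -/
def IsColliderPathBetween (G : MixedGraph V) (p : List V) (a b : V) : Prop :=
  IsPathBetween G p a b ∧ ∀ w, IsIntermediateOn p w → IsColliderOn G p w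

/-- The Markov blanket of `y`: all vertices adjacent to `y`, together with all
vertices non-adjacent to `y` joined to `y` by a collider path. -/
def MarkovBlanket (G : MixedGraph V) (y : V) : Set V :=
  {v | v ≠ y ∧ (G.adj v y ∨ (¬ G.adj v y ∧ ∃ p, IsColliderPathBetween G p v y))}

/-- The directed edge `x → y` is visible: there is a vertex `s` not adjacent
to `y` such that either there is an edge between `s` and `x` with an arrowhead
at `x`, or there is a collider path from `s` to `x` with an arrowhead at `x`
all of whose intermediate vertices are parents of `y`. -/
def VisibleEdge (G : MixedGraph V) (x y : V) : Prop :=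
  G.dir x y ∧ ∃ s, s ≠ y ∧ ¬ G.adj s y ∧
    (ArrowInto G s x ∨
      ∃ p, IsColliderPathBetween G p s x ∧
        (∃ (l : List V) (u : V), p = l ++ [u, x] ∧ ArrowInto G u x) ∧
        (∀ w, IsIntermediateOn p w → G.dir w y))

/-- A non-causal path from `x` to `y`: a path between `x` and `y` that is not
a directed path from `x` to `y`. -/
def NonCausalPath (G : MixedGraph V) (p : List V) (a b : V) : Prop :=
  IsPathBetween G p a b ∧ ¬ IsDirectedPath G p a b

/-- `Z` blocks every non-causal path from `x` to `y`. -/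
def BlocksAllNonCausal (G : MixedGraph V) (x y : V) (Z : Set V) : Prop :=
  ∀ p, NonCausalPath G p x y → ¬ MConnPath G Z p x y

/-- `Z` satisfies the generalized adjustment criterion relative to `(x, y)`:
every directed path from `x` to `y` starts with a visible directed edge out of
`x`, `Z` contains no descendant of any vertex lying on a directed path from
`x` to `y`, and `Z` blocks every non-causal path from `x` to `y`. -/
def ValidAdjustment (G : MixedGraph V) (x y : V) (Z : Set V) : Prop :=
  (∀ (p : List V) (w : V) (l : List V),
      IsDirectedPath G p x y → p = x :: w :: l → VisibleEdge G x w) ∧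
  (∀ v ∈ Z, ¬ ∃ (w : V) (p : List V), IsDirectedPath G p x y ∧ w ∈ p ∧ Ancestor G w v) ∧
  BlocksAllNonCausal G x y Z

/-- Pretreatment setup: `G` is a MAG over `V = {x, y} ∪ O`, `x ≠ y`, `y` is
not an ancestor of `x`, and neither `x` nor `y` is an ancestor of any vertex
of `O`. -/
structure Pretreatment (G : MixedGraph V) (x y : V) (O : Set V) : Prop where
  mag : IsMAG G
  ne : x ≠ y
  x_not_mem : x ∉ O
  y_not_mem : y ∉ O
  cover : (Set.univ : Set V) = {x, y} ∪ O
  y_not_anc_x : ¬ Ancestor G y x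
  x_not_anc_O : ∀ v ∈ O, ¬ Ancestor G x v
  y_not_anc_O : ∀ v ∈ O, ¬ Ancestor G y v
/-! ### Auxiliary machinery -/

section Aux

open List

variable {G : MixedGraph V}

lemma MixedGraph.adj_symm {a b : V} (h : G.adj a b) : G.adj b a := by
  rcases h with h | h | h
  · exact Or.inr (Or.inl h)
  · exact Or.inl h
  · exact Or.inr (Or.inr (G.bidir_symm _ _ h))

lemma MixedGraph.adj_irrefl (G : MixedGraph V) (a : V) : ¬ G.adj a a := by
  rintro (h | h | h)
  · exact G.dir_irrefl a h
  · exact G.dir_irrefl a h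
  · exact G.bidir_irrefl a h

lemma dir_of_not_arrowInto {a b : V} (hadj : G.adj a b) (h : ¬ ArrowInto G a b) : G.dir b a := by
  rcases hadj with h1 | h1 | h1
  · exact absurd (Or.inl h1) h
  · exact h1
  · exact absurd (Or.inr h1) h

lemma not_arrowInto_of_dir {a b : V} (h : G.dir a b) : ¬ ArrowInto G b a := by
  rintro (h1 | h1)
  · exact G.dir_not_dir _ _ h h1
  · exact G.dir_not_bidir _ _ h (G.bidir_symm _ _ h1)

lemma chain'_pair {R : V → V → Prop} {p l₁ l₂ : List V} {a b : V}
    (hc : List.Chain' R p) (he : p = l₁ ++ a :: b :: l₂) : R a b := by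
  have hs : List.Chain' R (a :: b :: l₂) := hc.suffix ⟨l₁, he.symm⟩
  exact (List.isChain_cons_cons.1 hs).1

lemma rtg_of_chain'_cons : ∀ {l : List V} {a b : V}, List.Chain' G.dir (a :: l) → b ∈ a :: l →
    Relation.ReflTransGen G.dir a b := by
  intro l
  induction l with
  | nil =>
    intro a b _ hb
    simp only [List.mem_singleton] at hb
    exact hb ▸ Relation.ReflTransGen.refl
  | cons c t ih =>
    intro a b hc hb
    rcases List.mem_cons.1 hb with rfl | hb
    · exact Relation.ReflTransGen.refl
    · exact Relation.ReflTransGen.head (List.isChain_cons_cons.1 hc).1 (ih (List.isChain_cons_cons.1 hc).2 hb)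

lemma anc_rtg {a b : V} (h : Ancestor G a b) : Relation.ReflTransGen G.dir a b := by
  rcases h with rfl | ⟨p, hc, _, hh, hl, _⟩
  · exact Relation.ReflTransGen.refl
  · match p, hh with
    | a' :: t, hh =>
      have ha : a' = a := by simpa using hh
      subst ha
      refine rtg_of_chain'_cons hc (List.mem_of_mem_getLast? (l := a' :: t) ?_)
      rw [Option.mem_def]
      exact hl

lemma rtg_anc {a b : V} (h : Relation.ReflTransGen G.dir a b) : Ancestor G a b := by
  induction h with
  | refl => exact Or.inl rfl
  | @tail c d hac hcd ih =>
    rcases ih with rfl | ⟨p, hc, hnd, hh, hl, hlen⟩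
    · have hne : a ≠ d := by rintro rfl; exact G.dir_irrefl a hcd
      refine Or.inr ⟨[a, d], ?_, ?_, rfl, rfl, by simp⟩
      · exact List.isChain_pair.2 hcd
      · simp [hne]
    · by_cases hd : d ∈ p
      · obtain ⟨s, t, rfl⟩ := List.append_of_mem hd
        cases s with
        | nil =>
          have had : d = a := by simpa using hh
          exact Or.inl had.symm
        | cons a' s' =>
          have ha : a' = a := by simpa using hh
          refine ha ▸ Or.inr ⟨a' :: s' ++ [d], ?_, ?_, ?_, ?_, ?_⟩
          · exact hc.prefix ⟨t, by simp⟩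
          · exact List.Nodup.sublist (List.IsPrefix.sublist ⟨t, by simp⟩) hnd
          · rfl
          · exact List.getLast?_concat (l := a' :: s')
          · simp [List.length_append]
      · refine Or.inr ⟨p ++ [d], ?_, ?_, ?_, ?_, ?_⟩
        · refine List.IsChain.append hc (by simp) ?_
          intro u hu v hv
          simp only [List.head?_cons, Option.mem_def, Option.some.injEq] at hv
          have huc : u = c := by rw [hl] at hu; exact (by simpa using hu : c = u).symm
          subst huc; subst hv; exact hcd
        · simp [List.nodup_append, hnd, hd]
          exact fun a ha h => hd (h ▸ ha)
        · match p, hh with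
          | _ :: _, hh => simpa using hh
        · simp
        · rw [List.length_append]; omega

/-- The set of ancestors (via reflexive-transitive closure of `dir`) of `Z`. -/
def AnS (G : MixedGraph V) (Z : Set V) : Set V :=
  {v | ∃ d ∈ Z, Relation.ReflTransGen G.dir v d}

/-- The m-connection condition for a window `(u, w, v)` of a walk. -/
def Cw (G : MixedGraph V) (Z : Set V) (u w v : V) : Prop :=
  ((ArrowInto G u w ∧ ArrowInto G v w) → w ∈ AnS G Z) ∧
  (¬ (ArrowInto G u w ∧ ArrowInto G v w) → w ∉ Z)

/-- All windows of `p` satisfy the m-connection condition. -/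
def WOk (G : MixedGraph V) (Z : Set V) (p : List V) : Prop :=
  ∀ l₁ u w v l₂, p = l₁ ++ u :: w :: v :: l₂ → Cw G Z u w v

variable {Z : Set V}

lemma cw_symm {u w v : V} (h : Cw G Z u w v) : Cw G Z v w u := by
  unfold Cw at *
  constructor
  · intro hb; exact h.1 ⟨hb.2, hb.1⟩
  · intro hb; exact h.2 (fun hb' => hb ⟨hb'.2, hb'.1⟩)

lemma wok_short {p : List V} (h : p.length ≤ 2) : WOk G Z p := by
  intro l₁ u w v l₂ he
  exfalso
  have := congrArg List.length he
  simp [List.length_append] at this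
  omega

lemma wok_infix {p q : List V} (h : WOk G Z p) (hq : q <:+: p) : WOk G Z q := by
  obtain ⟨s, t, rfl⟩ := hq
  intro l₁ u w v l₂ he
  exact h (s ++ l₁) u w v (l₂ ++ t) (by rw [he]; simp)

lemma wok_cons_of {a : V} {t : List V} (h1 : ∀ w v r, t = w :: v :: r → Cw G Z a w v)
    (h2 : WOk G Z t) : WOk G Z (a :: t) := by
  intro l₁ u w v l₂ he
  cases l₁ with
  | nil =>
    injection he with h3 h4
    subst h3
    exact h1 w v l₂ h4
  | cons c l₁' =>
    injection he with h3 h4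
    exact h2 l₁' u w v l₂ h4

lemma wok_reverse {p : List V} (h : WOk G Z p) : WOk G Z p.reverse := by
  intro l₁ u w v l₂ he
  have hp : p = l₂.reverse ++ v :: w :: u :: l₁.reverse := by
    rw [← List.reverse_reverse p, he]
    simp
  exact cw_symm (h l₂.reverse v w u l₁.reverse hp)

lemma exists_cons_cons_of_take2 {l : List V} {w v : V} (h : l.take 2 = [w, v]) :
    ∃ r, l = w :: v :: r := by
  cases l with
  | nil => simp at h
  | cons a l' =>
    cases l' with
    | nil => simp at h
    | cons b r =>
      simp at h
      exact ⟨r, by rw [h.1, h.2]⟩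

lemma take2_comm (xs ys : List V) : (xs ++ ys.take 2).take 2 = (xs ++ ys).take 2 := by
  rw [List.take_append, List.take_append, List.take_take]
  have : (2 - xs.length) ⊓ 2 = 2 - xs.length := by omega
  rw [this]

lemma wok_append {xs ys : List V} (h1 : WOk G Z (xs ++ ys.take 2)) (h2 : WOk G Z ys) :
    WOk G Z (xs ++ ys) := by
  induction xs with
  | nil => simpa using h2
  | cons c xs' ih =>
    have h1' : WOk G Z (xs' ++ ys.take 2) := wok_infix h1 ⟨[c], [], by simp⟩
    rw [List.cons_append]
    refine wok_cons_of ?_ (ih h1')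
    intro w v r he
    have ht : (xs' ++ ys.take 2).take 2 = [w, v] := by
      rw [take2_comm, he]
      rfl
    obtain ⟨r', hr'⟩ := exists_cons_cons_of_take2 ht
    exact h1 [] c w v r' (by simp only [List.cons_append, List.nil_append, hr'])

lemma wok_snoc {l : List V} {c : V} (h : WOk G Z l)
    (hc : ∀ a b l', l = l' ++ [a, b] → Cw G Z a b c) : WOk G Z (l ++ [c]) := by
  intro l₁ u w v l₂ he
  rcases List.eq_nil_or_concat l₂ with rfl | ⟨l₂', d, rfl⟩
  · have he' : l ++ [c] = (l₁ ++ [u, w]) ++ [v] := by rw [he]; simp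
    obtain ⟨hl, hcv⟩ := List.append_inj' he' rfl
    have : c = v := by injection hcv
    subst this
    exact hc u w l₁ hl
  · have he' : l ++ [c] = (l₁ ++ u :: w :: v :: l₂') ++ [d] := by
      rw [he]; simp [List.concat_eq_append]
    obtain ⟨hl, hcd⟩ := List.append_inj' he' rfl
    exact h l₁ u w v l₂' hl

lemma wok_of_dir_chain {l : List V} (hc : List.Chain' G.dir l) (hz : ∀ v ∈ l, v ∉ Z) :
    WOk G Z l := by
  intro l₁ u w v l₂ he
  have hwv : G.dir w v := chain'_pair hc (show l = (l₁ ++ [u]) ++ w :: v :: l₂ by rw [he]; simp)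
  constructor
  · rintro ⟨_, h2⟩
    exact absurd h2 (not_arrowInto_of_dir hwv)
  · intro _
    exact hz w (by rw [he]; simp)

lemma wok_of_rev_dir_chain {l : List V} (hc : List.Chain' (flip G.dir) l)
    (hz : ∀ v ∈ l, v ∉ Z) : WOk G Z l := by
  intro l₁ u w v l₂ he
  have hwu : G.dir w u := chain'_pair (R := flip G.dir) hc he
  constructor
  · rintro ⟨h1, _⟩
    exact absurd h1 (not_arrowInto_of_dir hwu)
  · intro _
    exact hz w (by rw [he]; simp)

lemma split_unique {w : V} : ∀ {s s' t t' : List V}, (s ++ w :: t).Nodup →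
    s ++ w :: t = s' ++ w :: t' → s = s' ∧ t = t' := by
  intro s
  induction s with
  | nil =>
    intro s' t t' hnd he
    cases s' with
    | nil =>
      refine ⟨rfl, ?_⟩
      injection he
    | cons a s'' =>
      exfalso
      injection he with h1 h2
      subst h1
      have hnd' : (w :: t).Nodup := hnd
      rw [List.nodup_cons] at hnd'
      have h2' : t = s'' ++ w :: t' := h2
      exact hnd'.1 (by rw [h2']; simp)
  | cons a s₂ ih =>
    intro s' t t' hnd he
    cases s' with
    | nil =>
      exfalso
      injection he with h1 h2
      subst h1
      have hnd' : (a :: (s₂ ++ a :: t)).Nodup := hnd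
      rw [List.nodup_cons] at hnd'
      exact hnd'.1 (by simp)
    | cons a' s₃ =>
      injection he with h1 h2
      subst h1
      have hnd' : (a :: (s₂ ++ w :: t)).Nodup := hnd
      rw [List.nodup_cons] at hnd'
      have h2' : s₂ ++ w :: t = s₃ ++ w :: t' := h2
      obtain ⟨hs, ht⟩ := ih hnd'.2 h2'
      exact ⟨by rw [hs], ht⟩

lemma collider_iff_window {p l₁ l₂ : List V} {u w v : V} (hnd : p.Nodup)
    (he : p = l₁ ++ u :: w :: v :: l₂) :
    IsColliderOn G p w ↔ (ArrowInto G u w ∧ ArrowInto G v w) := by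
  constructor
  · rintro ⟨u', v', m₁, m₂, he', h1, h2⟩
    have e1 : p = (l₁ ++ [u]) ++ w :: (v :: l₂) := by rw [he]; simp
    have e2 : p = (m₁ ++ [u']) ++ w :: (v' :: m₂) := by rw [he']; simp
    obtain ⟨hs, ht⟩ := split_unique (e1 ▸ hnd) (e1.symm.trans e2)
    have hu : u = u' := by
      obtain ⟨_, h⟩ := List.append_inj' hs rfl
      injection h
    have hv : v = v' := by injection ht
    exact ⟨hu ▸ h1, hv ▸ h2⟩
  · rintro ⟨h1, h2⟩
    exact ⟨u, v, l₁, l₂, he, h1, h2⟩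

/-- A "good walk": an m-connecting walk (repetitions allowed). -/
def GWalk (G : MixedGraph V) (Z : Set V) (p : List V) (a b : V) : Prop :=
  List.Chain' G.adj p ∧ WOk G Z p ∧ p.head? = some a ∧ p.getLast? = some b ∧ 2 ≤ p.length

lemma chase : ∀ (rest : List V) {p l : List V} {u m : V},
    List.Chain' G.adj p → WOk G Z p → p = l ++ u :: m :: rest → G.dir u m →
    u ∈ AnS G Z ∨ List.Chain' G.dir (u :: m :: rest) := by
  intro rest
  induction rest with
  | nil =>
    intro p l u m _ _ _ hd
    exact Or.inr (List.isChain_pair.2 hd)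
  | cons v r ih =>
    intro p l u m hc hw he hd
    by_cases hvm : ArrowInto G v m
    · obtain ⟨d, hdZ, hrtg⟩ := (hw l u m v r he).1 ⟨Or.inl hd, hvm⟩
      exact Or.inl ⟨d, hdZ, Relation.ReflTransGen.head hd hrtg⟩
    · have hadj : G.adj v m :=
        MixedGraph.adj_symm (chain'_pair hc (show p = (l ++ [u]) ++ m :: v :: r by rw [he]; simp))
      have hmv : G.dir m v := dir_of_not_arrowInto hadj hvm
      rcases ih (p := p) (l := l ++ [u]) hc hw (by rw [he]; simp) hmv with h | h
      · obtain ⟨d, hdZ, hrtg⟩ := h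
        exact Or.inl ⟨d, hdZ, Relation.ReflTransGen.head hd hrtg⟩
      · exact Or.inr (List.isChain_cons_cons.2 ⟨hd, h⟩)

lemma exists_dup_decomp {p : List V} (h : ¬ p.Nodup) :
    ∃ s w t₁ t₂, p = s ++ w :: (t₁ ++ w :: t₂) := by
  induction p with
  | nil => exact absurd List.nodup_nil h
  | cons a t ih =>
    by_cases ha : a ∈ t
    · obtain ⟨t₁, t₂, rfl⟩ := List.append_of_mem ha
      exact ⟨[], a, t₁, t₂, rfl⟩
    · have hnt : ¬ t.Nodup := fun hn => h (List.nodup_cons.2 ⟨ha, hn⟩)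
      obtain ⟨s, w, t₁, t₂, rfl⟩ := ih hnt
      exact ⟨a :: s, w, t₁, t₂, rfl⟩

lemma gwalk_to_mconn (hanc : ∀ a b, G.dir a b → ¬ Ancestor G b a) {a b : V} (hab : a ≠ b)
    (haZ : a ∉ Z) (hbZ : b ∉ Z) :
    ∀ n (p : List V), p.length ≤ n → GWalk G Z p a b → ∃ q, MConnPath G Z q a b := by
  intro n
  induction n with
  | zero =>
    intro p hl hg
    exfalso
    have := hg.2.2.2.2
    omega
  | succ n ih =>
    intro p hl hg
    obtain ⟨hc, hw, hh, hlst, hlen⟩ := hg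
    by_cases hnd : p.Nodup
    · refine ⟨p, ⟨hc, hnd, hh, hlst, hlen⟩, haZ, hbZ, ?_, ?_⟩
      · rintro w ⟨⟨u, v, l₁, l₂, he⟩, hncol⟩
        exact (hw l₁ u w v l₂ he).2 (fun hb => hncol ((collider_iff_window hnd he).2 hb))
      · rintro w ⟨u, v, l₁, l₂, he, h1, h2⟩
        obtain ⟨d, hdZ, hr⟩ := (hw l₁ u w v l₂ he).1 ⟨h1, h2⟩
        exact ⟨d, hdZ, rtg_anc hr⟩
    · obtain ⟨s, w, t₁, t₂, he⟩ := exists_dup_decomp hnd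
      obtain ⟨v₁, t₁', rfl⟩ : ∃ v₁ t₁', t₁ = v₁ :: t₁' := by
        cases t₁ with
        | nil =>
          exact absurd (chain'_pair hc (show p = s ++ w :: w :: t₂ by rw [he]; simp))
            (G.adj_irrefl w)
        | cons v₁ t₁' => exact ⟨v₁, t₁', rfl⟩
      -- head of the shortened walk
      have hh' : (s ++ w :: t₂).head? = some a := by
        cases s with
        | nil =>
          have hwa : w = a := by rw [he] at hh; simpa using hh
          simp [hwa]
        | cons c s' =>
          have hca : c = a := by rw [he] at hh; simpa using hh
          simp [hca]
      -- last of the shortened walk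
      have hl2 : (w :: t₂).getLast? = some b := by
        have h1 : p = (s ++ w :: v₁ :: t₁') ++ (w :: t₂) := by rw [he]; simp
        rw [h1, List.getLast?_append] at hlst
        cases hq : (w :: t₂).getLast? with
        | none => exact absurd hq (by simp [List.getLast?_eq_none_iff])
        | some z =>
          rw [hq] at hlst
          simp at hlst
          rw [hlst]
      have hl' : (s ++ w :: t₂).getLast? = some b := by
        rw [List.getLast?_append, hl2]
        rfl
      -- chain of the shortened walk
      have hcs : List.Chain' G.adj (w :: t₂) :=
        hc.suffix ⟨s ++ w :: v₁ :: t₁', by rw [he]; simp⟩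
      have hc' : List.Chain' G.adj (s ++ w :: t₂) := by
        refine List.isChain_append.2
          ⟨hc.prefix ⟨w :: (v₁ :: t₁' ++ w :: t₂), by rw [he]⟩, hcs, ?_⟩
        intro xx hxx yy hyy
        have hyw : w = yy := by simpa using hyy
        obtain ⟨s'', hs''⟩ := List.getLast?_eq_some_iff.1 (Option.mem_def.1 hxx)
        rw [← hyw]
        exact chain'_pair hc
          (show p = s'' ++ xx :: w :: (v₁ :: t₁' ++ w :: t₂) by rw [he, hs'']; simp)
      -- WOk of the shortened walk
      have hwq : WOk G Z (s ++ w :: t₂) := by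
        refine wok_append ?_ (wok_infix hw ⟨s ++ w :: v₁ :: t₁', [], by rw [he]; simp⟩)
        cases t₂ with
        | nil =>
          exact wok_infix hw ⟨[], v₁ :: t₁' ++ [w], by rw [he]; simp⟩
        | cons v₂ t₂' =>
          have hsw : WOk G Z (s ++ [w]) :=
            wok_infix hw ⟨[], v₁ :: t₁' ++ w :: v₂ :: t₂', by rw [he]; simp⟩
          rw [show s ++ (w :: v₂ :: t₂').take 2 = (s ++ [w]) ++ [v₂] by simp]
          refine wok_snoc hsw ?_
          intro a' b' l' hdec
          have hdec' : s ++ [w] = (l' ++ [a']) ++ [b'] := by rw [hdec]; simp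
          obtain ⟨hs, hbw⟩ := List.append_inj' hdec' rfl
          have hb'w : b' = w := by injection hbw.symm
          rw [hb'w]
          have hCw₁ : Cw G Z a' w v₁ :=
            hw l' a' w v₁ (t₁' ++ w :: v₂ :: t₂') (by rw [he, hs]; simp)
          obtain ⟨t₁'', u₂, ht₁⟩ : ∃ t₁'' u₂, v₁ :: t₁' = t₁'' ++ [u₂] := by
            rcases List.eq_nil_or_concat (v₁ :: t₁') with h0 | ⟨L, z, hz⟩
            · exact absurd h0 (by simp)
            · exact ⟨L, z, by simpa [List.concat_eq_append] using hz⟩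
          have hCw₂ : Cw G Z u₂ w v₂ := by
            refine hw (s ++ w :: t₁'') u₂ w v₂ t₂' ?_
            rw [he, ht₁]
            simp
          constructor
          · rintro ⟨h1, h2⟩
            by_cases hv₁ : ArrowInto G v₁ w
            · exact hCw₁.1 ⟨h1, hv₁⟩
            · have hadj : G.adj v₁ w := MixedGraph.adj_symm
                (chain'_pair hc (show p = s ++ w :: v₁ :: (t₁' ++ w :: v₂ :: t₂')
                  by rw [he]; simp))
              have hwv₁ : G.dir w v₁ := dir_of_not_arrowInto hadj hv₁
              rcases chase (t₁' ++ w :: v₂ :: t₂') (l := s) hc hw (by rw [he]; simp) hwv₁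
                with h | h
              · exact h
              · exfalso
                have hmem : w ∈ v₁ :: (t₁' ++ w :: v₂ :: t₂') := by simp
                have hr : Relation.ReflTransGen G.dir v₁ w :=
                  rtg_of_chain'_cons (List.isChain_cons_cons.1 h).2 hmem
                exact hanc w v₁ hwv₁ (rtg_anc hr)
          · intro hnb
            rcases not_and_or.1 hnb with h1 | h1
            · exact hCw₁.2 (fun hb2 => h1 hb2.1)
            · exact hCw₂.2 (fun hb2 => h1 hb2.2)
      -- length bound
      have hlen' : 2 ≤ (s ++ w :: t₂).length := by
        cases s with
        | nil =>
          cases t₂ with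
          | nil =>
            exfalso
            have hwa : w = a := by simpa using hh'
            have hwb : w = b := by simpa using hl'
            exact hab (hwa ▸ hwb ▸ rfl)
          | cons d t₂' => simp
        | cons c s' => simp; omega
      have hlt : (s ++ w :: t₂).length ≤ n := by
        have h1 := congrArg List.length he
        simp [List.length_append] at h1 ⊢
        omega
      exact ih (s ++ w :: t₂) hlt ⟨hc', hwq, hh', hl', hlen'⟩

lemma intermediate_reverse {p : List V} {w : V} (h : IsIntermediateOn p.reverse w) :
    IsIntermediateOn p w := by
  obtain ⟨u, v, l₁, l₂, he⟩ := h
  refine ⟨v, u, l₂.reverse, l₁.reverse, ?_⟩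
  rw [← List.reverse_reverse p, he]
  simp

lemma collider_reverse {p : List V} {w : V} (h : IsColliderOn G p w) :
    IsColliderOn G p.reverse w := by
  obtain ⟨u, v, l₁, l₂, he, h1, h2⟩ := h
  exact ⟨v, u, l₂.reverse, l₁.reverse, by rw [he]; simp, h2, h1⟩

lemma colliderPath_reverse {p : List V} {a b : V} (h : IsColliderPathBetween G p a b) :
    IsColliderPathBetween G p.reverse b a := by
  obtain ⟨⟨hc, hnd, hh, hl, hlen⟩, hcol⟩ := h
  refine ⟨⟨?_, by simpa using hnd, ?_, ?_, by simpa using hlen⟩, ?_⟩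
  · exact List.isChain_reverse.2 (hc.imp (fun a b h => MixedGraph.adj_symm h))
  · rw [List.head?_reverse]; exact hl
  · rw [List.getLast?_reverse]; exact hh
  · intro w hw
    exact collider_reverse (hcol w (intermediate_reverse hw))

lemma mem_cases_of_mem {p : List V} {v a b : V} (hv : v ∈ p) (hh : p.head? = some a)
    (hl : p.getLast? = some b) : v = a ∨ v = b ∨ IsIntermediateOn p v := by
  obtain ⟨s, t, rfl⟩ := List.append_of_mem hv
  cases s with
  | nil =>
    left
    exact (by simpa using hh : v = a)
  | cons c s' =>
    rcases List.eq_nil_or_concat t with rfl | ⟨t', d, rfl⟩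
    · right; left
      have h2 : ((c :: s') ++ [v]).getLast? = some b := hl
      rw [List.getLast?_concat] at h2
      exact Option.some.inj h2
    · right; right
      obtain ⟨s'', u, hs⟩ : ∃ s'' u, c :: s' = s'' ++ [u] := by
        rcases List.eq_nil_or_concat (c :: s') with h0 | ⟨s'', u, h1⟩
        · simp at h0
        · exact ⟨s'', u, by simpa [List.concat_eq_append] using h1⟩
      cases t' with
      | nil => exact ⟨u, d, s'', [], by rw [hs]; simp [List.concat_eq_append]⟩
      | cons e t'' => exact ⟨u, e, s'', t'' ++ [d], by rw [hs]; simp [List.concat_eq_append]⟩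

lemma exists_rightmost {Q : V → Prop} : ∀ {l : List V}, (∃ v ∈ l, Q v) →
    ∃ l₁ v l₂, l = l₁ ++ v :: l₂ ∧ Q v ∧ ∀ u ∈ l₂, ¬ Q u := by
  intro l
  induction l with
  | nil => rintro ⟨v, hv, _⟩; simp at hv
  | cons a t ih =>
    rintro ⟨v, hv, hQ⟩
    by_cases ht : ∃ v ∈ t, Q v
    · obtain ⟨l₁, v', l₂, rfl, h1, h2⟩ := ih ht
      exact ⟨a :: l₁, v', l₂, rfl, h1, h2⟩
    · push_neg at ht
      have hva : v = a := by
        rcases List.mem_cons.1 hv with rfl | h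
        · rfl
        · exact absurd hQ (ht v h)
      subst hva
      exact ⟨[], v, t, rfl, hQ, ht⟩

lemma exists_leftmost {Q : V → Prop} : ∀ {l : List V}, (∃ v ∈ l, Q v) →
    ∃ l₁ v l₂, l = l₁ ++ v :: l₂ ∧ Q v ∧ ∀ u ∈ l₁, ¬ Q u := by
  intro l
  induction l with
  | nil => rintro ⟨v, hv, _⟩; simp at hv
  | cons a t ih =>
    rintro ⟨v, hv, hQ⟩
    by_cases hQa : Q a
    · exact ⟨[], a, t, rfl, hQa, by simp⟩
    · have hvt : v ∈ t := by
        rcases List.mem_cons.1 hv with rfl | h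
        · exact absurd hQ hQa
        · exact h
      obtain ⟨l₁, v', l₂, rfl, h1, h2⟩ := ih ⟨v, hvt, hQ⟩
      refine ⟨a :: l₁, v', l₂, rfl, h1, ?_⟩
      intro u hu
      rcases List.mem_cons.1 hu with rfl | h
      · exact hQa
      · exact h2 u h

lemma interior_mem {a b w u v : V} {m l₁ l₂ : List V} (hnd : (a :: m ++ [b]).Nodup)
    (he : a :: m ++ [b] = l₁ ++ u :: w :: v :: l₂) : w ∈ m := by
  have hndc : a ∉ m ++ [b] ∧ (m ++ [b]).Nodup := by
    rw [show a :: m ++ [b] = a :: (m ++ [b]) from rfl, List.nodup_cons] at hnd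
    exact hnd
  have hwm : w ∈ m ++ [b] := by
    cases l₁ with
    | nil =>
      injection he with h1 h2
      have h2' : m ++ [b] = w :: v :: l₂ := h2
      rw [h2']; simp
    | cons c l₁' =>
      injection he with h1 h2
      have h2' : m ++ [b] = l₁' ++ u :: w :: v :: l₂ := h2
      rw [h2']; simp
  have hwa : w ≠ a := fun h => hndc.1 (h ▸ hwm)
  have hwb : w ≠ b := by
    have he2 : a :: m ++ [b] = (l₁ ++ [u]) ++ w :: (v :: l₂) := by rw [he]; simp
    have hnd2 : ((l₁ ++ [u]) ++ w :: (v :: l₂)).Nodup := he2 ▸ hnd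
    have hw2 : (w :: v :: l₂).Nodup :=
      (List.IsSuffix.sublist ⟨l₁ ++ [u], by simp⟩).nodup hnd2
    have hbmem : b ∈ v :: l₂ := by
      have h3 : ((l₁ ++ [u]) ++ w :: (v :: l₂)).getLast? = some b := by
        rw [← he2]
        exact List.getLast?_concat (l := a :: m)
      rw [List.getLast?_append] at h3
      have h4 : (w :: v :: l₂).getLast? = some b := by
        cases hq : (w :: v :: l₂).getLast? with
        | none => exact absurd hq (by simp [List.getLast?_eq_none_iff])
        | some z => rw [hq] at h3; simp at h3; rw [h3]
      rw [List.getLast?_cons_cons] at h4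
      exact List.mem_of_mem_getLast? (Option.mem_def.2 h4)
    intro hwbe
    rw [List.nodup_cons] at hw2
    exact hw2.1 (hwbe ▸ hbmem)
  rcases List.mem_append.1 hwm with h | h
  · exact h
  · exact absurd (by simpa using h) hwb

lemma build_gwalk {Z₀ : Set V} {x y va vb : V} {A B mid : List V}
    (hA : List.Chain' (flip G.dir) A) (hAh : A.head? = some x) (hAl : A.getLast? = some va)
    (hAZ : ∀ u ∈ A, u ∉ Z₀)
    (hB : List.Chain' G.dir B) (hBh : B.head? = some vb) (hBl : B.getLast? = some y)
    (hBZ : ∀ u ∈ B, u ∉ Z₀)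
    (hchain : List.Chain' G.adj (va :: mid ++ [vb]))
    (hmid : ∀ l₁ u w v l₂, va :: mid ++ [vb] = l₁ ++ u :: w :: v :: l₂ →
      (ArrowInto G u w ∧ ArrowInto G v w) ∧ w ∈ AnS G Z₀) :
    ∃ W, GWalk G Z₀ W x y := by
  obtain ⟨A', hA'eq⟩ := List.getLast?_eq_some_iff.1 hAl
  obtain ⟨B', hBeq⟩ : ∃ B', B = vb :: B' := by
    cases B with
    | nil => simp at hBh
    | cons c B' => exact ⟨B', by rw [(by simpa using hBh : c = vb)]⟩
  set seg : List V := va :: mid ++ [vb] with hsegdef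
  have hseg_last : seg.getLast? = some vb := List.getLast?_concat (l := va :: mid)
  -- WOk of the middle segment
  have hwseg : WOk G Z₀ seg := by
    intro l₁ u w v l₂ he
    obtain ⟨hAI, hAn⟩ := hmid l₁ u w v l₂ he
    exact ⟨fun _ => hAn, fun hn => (hn hAI).elim⟩
  -- WOk of B'
  have hB'sfx : B' <:+ B := ⟨[vb], hBeq.symm⟩
  have hwB' : WOk G Z₀ B' :=
    wok_of_dir_chain (hB.suffix hB'sfx) (fun u hu => hBZ u (hB'sfx.sublist.mem hu))
  -- WOk (seg ++ B'.take 2)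
  have h1 : WOk G Z₀ (seg ++ B'.take 2) := by
    cases B' with
    | nil => simpa using hwseg
    | cons b₀ B'' =>
      have hdir0 : G.dir vb b₀ := (List.isChain_cons_cons.1 (hBeq ▸ hB)).1
      have hstep1 : WOk G Z₀ (seg ++ [b₀]) := by
        refine wok_snoc hwseg ?_
        intro a1 a2 l' hdec
        have ha2 : a2 = vb := by
          have h3 := hdec ▸ hseg_last
          rw [show l' ++ [a1, a2] = (l' ++ [a1]) ++ [a2] by simp, List.getLast?_concat] at h3
          exact Option.some.inj h3
        refine ⟨fun hb => absurd hb.2 (ha2 ▸ not_arrowInto_of_dir hdir0), fun _ => ?_⟩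
        rw [ha2]
        exact hBZ vb (by rw [hBeq]; simp)
      cases B'' with
      | nil => simpa using hstep1
      | cons b₁ B''' =>
        have hdir1 : G.dir b₀ b₁ := (List.isChain_cons_cons.1 (List.isChain_cons_cons.1 (hBeq ▸ hB)).2).1
        have hstep2 : WOk G Z₀ ((seg ++ [b₀]) ++ [b₁]) := by
          refine wok_snoc hstep1 ?_
          intro a1 a2 l' hdec
          have ha2 : a2 = b₀ := by
            have h3 := hdec ▸ List.getLast?_concat (l := seg) (a := b₀)
            rw [show l' ++ [a1, a2] = (l' ++ [a1]) ++ [a2] by simp, List.getLast?_concat] at h3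
            exact Option.some.inj h3
          refine ⟨fun hb => absurd hb.2 (ha2 ▸ not_arrowInto_of_dir hdir1), fun _ => ?_⟩
          rw [ha2]
          exact hBZ b₀ (by rw [hBeq]; simp)
        have hre : (seg ++ [b₀]) ++ [b₁] = seg ++ (b₀ :: b₁ :: B''').take 2 := by simp
        rw [← hre]
        exact hstep2
  -- WOk (A ++ [head of seg tail])
  obtain ⟨s₁, rest, hseg2⟩ : ∃ s₁ rest, seg = va :: s₁ :: rest := by
    cases mid with
    | nil => exact ⟨vb, [], rfl⟩
    | cons m₀ mid' => exact ⟨m₀, mid' ++ [vb], rfl⟩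
  have hwA : WOk G Z₀ A := wok_of_rev_dir_chain hA hAZ
  have h2 : WOk G Z₀ (A ++ [s₁]) := by
    refine wok_snoc hwA ?_
    intro a1 a2 l' hdec
    have ha2 : a2 = va := by
      have h3 := hdec ▸ hAl
      rw [show l' ++ [a1, a2] = (l' ++ [a1]) ++ [a2] by simp, List.getLast?_concat] at h3
      exact Option.some.inj h3
    have hdir : G.dir a2 a1 := chain'_pair (R := flip G.dir) hA (show A = l' ++ a1 :: a2 :: [] from hdec)
    refine ⟨fun hb => absurd hb.1 (not_arrowInto_of_dir hdir), fun _ => ?_⟩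
    rw [ha2]
    exact hAZ va (List.mem_of_mem_getLast? (Option.mem_def.2 hAl))
  -- assemble WOk of the walk
  refine ⟨A' ++ (seg ++ B'), ?_, ?_, ?_, ?_, ?_⟩
  · -- chain
    have hcA : List.Chain' G.adj A := hA.imp (fun a b h => Or.inr (Or.inl h))
    have hcB : List.Chain' G.adj B := hB.imp (fun a b h => Or.inl h)
    refine List.isChain_append.2 ⟨hcA.prefix ⟨[va], hA'eq.symm⟩, ?_, ?_⟩
    · refine List.isChain_append.2 ⟨hchain, hcB.suffix hB'sfx, ?_⟩
      intro xx hxx yy hyy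
      have hxxvb : xx = vb := by
        rw [hseg_last] at hxx
        exact (by simpa using hxx : vb = xx).symm
      cases B' with
      | nil => simp at hyy
      | cons b₀ B'' =>
        have hyy' : yy = b₀ := (by simpa using hyy : b₀ = yy).symm
        rw [hxxvb, hyy']
        exact Or.inl (List.isChain_cons_cons.1 (hBeq ▸ hB)).1
    · intro xx hxx yy hyy
      have hyyva : yy = va := by
        have : (seg ++ B').head? = some va := by rw [hseg2]; rfl
        rw [this] at hyy
        exact (by simpa using hyy : va = yy).symm
      obtain ⟨A'', hA''⟩ := List.getLast?_eq_some_iff.1 (Option.mem_def.1 hxx)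
      rw [hyyva]
      exact chain'_pair hcA (show A = A'' ++ xx :: va :: [] by rw [hA'eq, hA'']; simp)
  · -- WOk
    refine wok_append ?_ (wok_append h1 hwB')
    have htk : (seg ++ B').take 2 = [va, s₁] := by rw [hseg2]; rfl
    rw [htk, show A' ++ [va, s₁] = (A' ++ [va]) ++ [s₁] by simp, ← hA'eq]
    exact h2
  · -- head
    cases A' with
    | nil =>
      have : va = x := by rw [hA'eq] at hAh; simpa using hAh
      rw [List.nil_append, hseg2]
      simpa using this
    | cons a0 A'' =>
      have : a0 = x := by rw [hA'eq] at hAh; simpa using hAh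
      simpa using this
  · -- last
    have hlast : (seg ++ B').getLast? = some y := by
      cases B' with
      | nil =>
        have : vb = y := by rw [hBeq] at hBl; simpa using hBl
        rw [List.append_nil, hseg_last, this]
      | cons b₀ B'' =>
        rw [List.getLast?_append]
        have : (b₀ :: B'').getLast? = some y := by
          have h3 : B.getLast? = some y := hBl
          rw [hBeq, List.getLast?_cons_cons] at h3
          exact h3
        rw [this]
        rfl
    rw [List.getLast?_append, hlast]
    rfl
  · -- length
    have : seg.length = mid.length + 2 := by simp [hsegdef]
    simp [List.length_append]
    omega

end Aux

/-- Case 1 in Scenario 2 of the proof of Theorem 4 (necessity of rule R2(i)):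
non-adjacent vertices of a MAG are m-separated by a subset of `MB(y) \ {x}`. -/
theorem nonadjacent_msep_within_markov_blanket
    {V : Type*} [Fintype V] (G : MixedGraph V) (hG : IsMAG G)
    (x y : V) (hne : x ≠ y) (hnadj : ¬ G.adj x y) :
    ∃ Z ⊆ MarkovBlanket G y \ {x}, MSep G Z x y := by
  classical
  set AnXY : Set V :=
    {v | Relation.ReflTransGen G.dir v x ∨ Relation.ReflTransGen G.dir v y} with hAnXYdef
  set Z : Set V :=
    {v | v ≠ x ∧ v ≠ y ∧ ∃ q, IsColliderPathBetween G q y v ∧ ∀ z ∈ q, z ∈ AnXY} with hZdef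
  refine ⟨Z, ?_, ?_⟩
  · -- Z is contained in the Markov blanket of y minus x
    intro v hv
    obtain ⟨hvx, hvy, q, hq, _⟩ := hv
    refine ⟨⟨hvy, ?_⟩, by simpa using hvx⟩
    by_cases hadj : G.adj v y
    · exact Or.inl hadj
    · exact Or.inr ⟨hadj, q.reverse, colliderPath_reverse hq⟩
  · -- Z m-separates x and y
    intro p hp
    obtain ⟨⟨hc, hnd, hh, hl, hlen⟩, hxZ, hyZ, hnc, hcolZ⟩ := hp
    -- windows version of the m-connection conditions
    have hw : WOk G Z p := by
      intro l₁ u w v l₂ he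
      constructor
      · intro hb
        obtain ⟨d, hd1, hd2⟩ := hcolZ w ((collider_iff_window hnd he).2 hb)
        exact ⟨d, hd1, anc_rtg hd2⟩
      · intro hnb
        exact hnc w ⟨⟨u, v, l₁, l₂, he⟩, fun hcl => hnb ((collider_iff_window hnd he).1 hcl)⟩
    have hZsub : ∀ z ∈ Z, z ∈ AnXY := by
      rintro z ⟨_, _, q, hq, hancq⟩
      exact hancq z (List.mem_of_mem_getLast? (Option.mem_def.2 hq.1.2.2.2.1))
    have hAnS_sub : ∀ v, v ∈ AnS G Z → v ∈ AnXY := by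
      rintro v ⟨d, hdZ, hrtg⟩
      rcases hZsub d hdZ with h | h
      · exact Or.inl (hrtg.trans h)
      · exact Or.inr (hrtg.trans h)
    have hcrev : List.Chain' G.adj p.reverse :=
      List.isChain_reverse.2 (hc.imp (fun a b h => MixedGraph.adj_symm h))
    have hwrev : WOk G Z p.reverse := wok_reverse hw
    -- every vertex of p is an ancestor of x or y
    have hmemAn : ∀ v ∈ p, v ∈ AnXY := by
      intro v hv
      rcases mem_cases_of_mem hv hh hl with rfl | rfl | ⟨u, v', l₁, l₂, he⟩
      · exact Or.inl Relation.ReflTransGen.refl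
      · exact Or.inr Relation.ReflTransGen.refl
      · by_cases hb : ArrowInto G u v ∧ ArrowInto G v' v
        · exact hAnS_sub v ((hw l₁ u v v' l₂ he).1 hb)
        · rcases not_and_or.1 hb with h1 | h1
          · have hadj : G.adj u v := chain'_pair hc he
            have hdir : G.dir v u := dir_of_not_arrowInto hadj h1
            have hrev : p.reverse = (l₂.reverse ++ [v']) ++ v :: u :: l₁.reverse := by
              rw [he]; simp
            rcases chase l₁.reverse hcrev hwrev hrev hdir with h | h
            · exact hAnS_sub v h
            · have hx2 : (v :: u :: l₁.reverse).getLast? = some x := by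
                have h3 : p.reverse.getLast? = some x := by
                  rw [List.getLast?_reverse]; exact hh
                rw [hrev, List.getLast?_append] at h3
                cases hq : (v :: u :: l₁.reverse).getLast? with
                | none => exact absurd hq (by simp [List.getLast?_eq_none_iff])
                | some z => rw [hq] at h3; simp at h3; rw [h3]
              exact Or.inl
                (rtg_of_chain'_cons h (List.mem_of_mem_getLast? (Option.mem_def.2 hx2)))
          · have hadj : G.adj v v' :=
              chain'_pair hc (show p = (l₁ ++ [u]) ++ v :: v' :: l₂ by rw [he]; simp)
            have hdir : G.dir v v' := dir_of_not_arrowInto (MixedGraph.adj_symm hadj) h1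
            rcases chase l₂ hc hw (show p = (l₁ ++ [u]) ++ v :: v' :: l₂ by rw [he]; simp) hdir
              with h | h
            · exact hAnS_sub v h
            · have hy2 : (v :: v' :: l₂).getLast? = some y := by
                have h3 : p.getLast? = some y := hl
                rw [show p = (l₁ ++ [u]) ++ v :: v' :: l₂ by rw [he]; simp,
                  List.getLast?_append] at h3
                cases hq : (v :: v' :: l₂).getLast? with
                | none => exact absurd hq (by simp [List.getLast?_eq_none_iff])
                | some z => rw [hq] at h3; simp at h3; rw [h3]
              exact Or.inr
                (rtg_of_chain'_cons h (List.mem_of_mem_getLast? (Option.mem_def.2 hy2)))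
    -- p = x :: mid0 ++ [y]
    obtain ⟨p₀, hp₀⟩ : ∃ p₀, p = x :: p₀ := by
      cases p with
      | nil => simp at hh
      | cons c p₀ => exact ⟨p₀, by rw [(by simpa using hh : c = x)]⟩
    obtain ⟨mid0, hmid0⟩ : ∃ mid0, p = x :: mid0 ++ [y] := by
      rcases List.eq_nil_or_concat p₀ with rfl | ⟨m, z, hz⟩
      · rw [hp₀] at hlen; simp at hlen
      · have hz' : p₀ = m ++ [z] := by simpa [List.concat_eq_append] using hz
        have hzy : z = y := by
          have h3 : p.getLast? = some z := by
            rw [hp₀, hz']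
            exact List.getLast?_concat (l := x :: m)
          rw [hl] at h3
          exact (Option.some.inj h3).symm
        exact ⟨m, by rw [hp₀, hz', hzy]; simp⟩
    have hmid0ne : mid0 ≠ [] := by
      rintro rfl
      exact hnadj (chain'_pair hc (show p = [] ++ x :: y :: [] by rw [hmid0]; simp))
    have hndm : x ∉ mid0 ∧ y ∉ mid0 := by
      have h3 : (x :: (mid0 ++ [y])).Nodup := by
        have h4 := hnd
        rw [hmid0] at h4
        exact h4
      rw [List.nodup_cons] at h3
      constructor
      · exact fun hx3 => h3.1 (List.mem_append_left _ hx3)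
      · intro hy3
        rw [List.nodup_append] at h3
        exact h3.2.2.2 y hy3 y (by simp) rfl
    -- all interior vertices are colliders, via collider paths into Z
    have claim : ∀ (t : List V), ∀ l w, p = l ++ w :: t → l ≠ [] → t ≠ [] →
        IsColliderPathBetween G ((w :: t).reverse) y w ∧ IsColliderOn G p w := by
      intro t
      induction t with
      | nil => intro l w _ _ ht; exact absurd rfl ht
      | cons c t'' ih =>
        intro l w he hl0 _
        have hsuffix : (w :: c :: t'') <:+ p := ⟨l, he.symm⟩
        have hndsub : (w :: c :: t'').Nodup := hsuffix.sublist.nodup hnd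
        obtain ⟨l'', u, hl''⟩ : ∃ l'' u, l = l'' ++ [u] := by
          rcases List.eq_nil_or_concat l with rfl | ⟨l'', u, h4⟩
          · exact absurd rfl hl0
          · exact ⟨l'', u, by simpa [List.concat_eq_append] using h4⟩
        have hwin : p = l'' ++ u :: w :: c :: t'' := by rw [he, hl'']; simp
        have hwm : w ∈ mid0 :=
          interior_mem (a := x) (b := y) (by rw [← hmid0]; exact hnd)
            (by rw [← hmid0]; exact hwin)
        have hwx : w ≠ x := fun h4 => hndm.1 (h4 ▸ hwm)
        have hwy : w ≠ y := fun h4 => hndm.2 (h4 ▸ hwm)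
        have hcp : IsColliderPathBetween G ((w :: c :: t'').reverse) y w := by
          cases t'' with
          | nil =>
            have hcy : c = y := by
              have h6 : p.getLast? = some c := by
                rw [he, show l ++ w :: c :: ([] : List V) = (l ++ [w]) ++ [c] by simp]
                exact List.getLast?_concat
              rw [hl] at h6
              exact (Option.some.inj h6).symm
            have hadjwc : G.adj w c := chain'_pair hc he
            have hwc : w ≠ c := by
              rw [List.nodup_cons] at hndsub
              exact fun h4 => hndsub.1 (by rw [h4]; simp)
            rw [show (w :: c :: ([] : List V)).reverse = [c, w] from rfl]
            refine ⟨⟨?_, ?_, ?_, rfl, by simp⟩, ?_⟩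
            · exact List.isChain_cons_cons.2 ⟨MixedGraph.adj_symm hadjwc, by simp⟩
            · simp [Ne.symm hwc]
            · rw [hcy]; rfl
            · intro z hz
              obtain ⟨a1, a2, L₁, L₂, hez⟩ := hz
              exfalso
              have h7 := congrArg List.length hez
              simp [List.length_append] at h7
              omega
          | cons d t₃ =>
            obtain ⟨hcp', hcolc⟩ := ih (l ++ [w]) c (by rw [he]; simp) (by simp) (by simp)
            have hAIc : ArrowInto G w c ∧ ArrowInto G d c :=
              (collider_iff_window hnd he).1 hcolc
            have hrw : (w :: c :: d :: t₃).reverse = (c :: d :: t₃).reverse ++ [w] := by simp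
            obtain ⟨⟨hcpc, hcpnd, hcph, hcpl, hcplen⟩, hcpcol⟩ := hcp'
            refine ⟨⟨?_, ?_, ?_, ?_, ?_⟩, ?_⟩
            · rw [hrw]
              refine List.isChain_append.2 ⟨hcpc, by simp, ?_⟩
              intro xx hxx yy hyy
              have hyy' : yy = w := (by simpa using hyy : w = yy).symm
              have hxx' : xx = c := by
                rw [hcpl] at hxx
                exact (by simpa using hxx : c = xx).symm
              rw [hxx', hyy']
              exact MixedGraph.adj_symm (chain'_pair hc he)
            · rw [List.nodup_reverse]
              exact hndsub
            · rw [hrw, List.head?_append, hcph]; rfl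
            · rw [hrw]; exact List.getLast?_concat
            · rw [hrw]
              simp only [List.length_append, List.length_reverse, List.length_cons]
              omega
            · intro z hz
              have hez0 := hz
              obtain ⟨a1, a2, L₁, L₂, hez⟩ := hz
              rw [hrw] at hez
              rcases List.eq_nil_or_concat L₂ with rfl | ⟨L₂', e, hL₂⟩
              · have hez' : (c :: d :: t₃).reverse ++ [w] = (L₁ ++ [a1, z]) ++ [a2] := by
                  rw [hez]; simp
                obtain ⟨h8, h9⟩ := List.append_inj' hez' rfl
                have ha2 : a2 = w := (by simpa using h9 : w = a2).symm
                have hzc : z = c := by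
                  have h10 : ((L₁ ++ [a1]) ++ [z]).getLast? = some c := by
                    rw [show (L₁ ++ [a1]) ++ [z] = L₁ ++ [a1, z] by simp, ← h8,
                      List.getLast?_reverse]
                    rfl
                  rw [List.getLast?_concat] at h10
                  exact Option.some.inj h10
                have ha1 : a1 = d := by
                  have h11 : (d :: t₃).reverse ++ [c] = (L₁ ++ [a1]) ++ [c] := by
                    have h12 : (c :: d :: t₃).reverse = L₁ ++ [a1, c] := by rw [h8, hzc]
                    rw [show (c :: d :: t₃).reverse = (d :: t₃).reverse ++ [c] by simp] at h12
                    rw [h12]; simp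
                  have h13 := (List.append_inj' h11 rfl).1
                  have h14 : ((d :: t₃).reverse).getLast? = some a1 := by
                    rw [h13]; exact List.getLast?_concat
                  rw [List.getLast?_reverse] at h14
                  exact (Option.some.inj h14).symm
                refine ⟨a1, a2, L₁, [], by rw [hrw, hez], ?_, ?_⟩
                · rw [ha1, hzc]; exact hAIc.2
                · rw [ha2, hzc]; exact hAIc.1
              · have hL₂' : L₂ = L₂' ++ [e] := by simpa [List.concat_eq_append] using hL₂
                have hez' : (c :: d :: t₃).reverse ++ [w] = (L₁ ++ a1 :: z :: a2 :: L₂') ++ [e] := by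
                  rw [hez, hL₂']; simp
                obtain ⟨h8, h9⟩ := List.append_inj' hez' rfl
                have hzi : IsColliderOn G ((c :: d :: t₃).reverse) z :=
                  hcpcol z ⟨a1, a2, L₁, L₂', h8⟩
                obtain ⟨u', v', m₁, m₂, he', A1, A2⟩ := hzi
                exact ⟨u', v', m₁, m₂ ++ [w], by rw [hrw, he']; simp, A1, A2⟩
        have hwZ : w ∈ Z := by
          refine ⟨hwx, hwy, (w :: c :: t'').reverse, hcp, ?_⟩
          intro z hz
          refine hmemAn z ?_
          rw [List.mem_reverse] at hz
          exact hsuffix.sublist.mem hz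
        have hCw := hw l'' u w c t'' hwin
        by_cases hb : ArrowInto G u w ∧ ArrowInto G c w
        · exact ⟨hcp, (collider_iff_window hnd hwin).2 hb⟩
        · exact absurd hwZ (hCw.2 hb)
    have pwin : ∀ l₁ u w v l₂, p = l₁ ++ u :: w :: v :: l₂ →
        ArrowInto G u w ∧ ArrowInto G v w := by
      intro l₁ u w v l₂ he
      have h4 := (claim (v :: l₂) (l₁ ++ [u]) w (by rw [he]; simp) (by simp) (by simp)).2
      exact (collider_iff_window hnd he).1 h4
    -- the separator coming from maximality
    obtain ⟨Z₀, hxZ₀, hyZ₀, hsep₀⟩ := hG.2.2 x y hne hnadj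
    have hmidAn : ∀ v ∈ mid0,
        Relation.ReflTransGen G.dir v x ∨ Relation.ReflTransGen G.dir v y := by
      intro v hv
      exact hmemAn v (by rw [hmid0]; simp [hv])
    have mkA : ∀ va ∈ mid0, Relation.ReflTransGen G.dir va x → va ∉ AnS G Z₀ →
        ∃ A, List.Chain' (flip G.dir) A ∧ A.head? = some x ∧ A.getLast? = some va ∧
          ∀ u ∈ A, u ∉ Z₀ := by
      intro va hva hrtg hbad
      have hvax : va ≠ x := fun h => hndm.1 (h ▸ hva)
      obtain ⟨dp, hdpc, hdpnd, hdph, hdpl, hdplen⟩ : ∃ dp, IsDirectedPath G dp va x := by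
        rcases rtg_anc hrtg with h | h
        · exact absurd h hvax
        · exact h
      refine ⟨dp.reverse, List.isChain_reverse.2 hdpc, ?_, ?_, ?_⟩
      · rw [List.head?_reverse]; exact hdpl
      · rw [List.getLast?_reverse]; exact hdph
      · intro u hu huZ
        apply hbad
        rw [List.mem_reverse] at hu
        have hr : Relation.ReflTransGen G.dir va u := by
          cases dp with
          | nil => simp at hdph
          | cons c dp' =>
            have hcva : c = va := by simpa using hdph
            exact hcva ▸ rtg_of_chain'_cons hdpc hu
        exact ⟨u, huZ, hr⟩
    have mkB : ∀ vb ∈ mid0, Relation.ReflTransGen G.dir vb y → vb ∉ AnS G Z₀ →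
        ∃ B, List.Chain' G.dir B ∧ B.head? = some vb ∧ B.getLast? = some y ∧
          ∀ u ∈ B, u ∉ Z₀ := by
      intro vb hvb hrtg hbad
      have hvby : vb ≠ y := fun h => hndm.2 (h ▸ hvb)
      obtain ⟨dp, hdpc, hdpnd, hdph, hdpl, hdplen⟩ : ∃ dp, IsDirectedPath G dp vb y := by
        rcases rtg_anc hrtg with h | h
        · exact absurd h hvby
        · exact h
      refine ⟨dp, hdpc, hdph, hdpl, ?_⟩
      intro u hu huZ
      apply hbad
      have hr : Relation.ReflTransGen G.dir vb u := by
        cases dp with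
        | nil => simp at hdph
        | cons c dp' =>
          have hcvb : c = vb := by simpa using hdph
          exact hcvb ▸ rtg_of_chain'_cons hdpc hu
      exact ⟨u, huZ, hr⟩
    have mkSeg : ∀ (P S m : List V) (a b : V), p = P ++ (a :: m ++ [b]) ++ S →
        (∀ w ∈ m, w ∈ AnS G Z₀) →
        List.Chain' G.adj (a :: m ++ [b]) ∧
        (∀ l₁ u w v l₂, a :: m ++ [b] = l₁ ++ u :: w :: v :: l₂ →
          (ArrowInto G u w ∧ ArrowInto G v w) ∧ w ∈ AnS G Z₀) := by
      intro P S m a b hdecomp hgood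
      have hinf : (a :: m ++ [b]) <:+: p := ⟨P, S, hdecomp.symm⟩
      constructor
      · exact hc.infix hinf
      · intro l₁ u w v l₂ he
        have hpw : p = (P ++ l₁) ++ u :: w :: v :: (l₂ ++ S) := by
          rw [hdecomp, he]; simp
        refine ⟨pwin _ _ _ _ _ hpw, ?_⟩
        have hndseg : (a :: m ++ [b]).Nodup := hinf.sublist.nodup hnd
        exact hgood w (interior_mem hndseg he)
    have hAone : List.Chain' (flip G.dir) [x] := List.isChain_singleton _
    have hAoneZ : ∀ u ∈ [x], u ∉ Z₀ := by
      intro u hu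
      rw [List.mem_singleton] at hu
      rw [hu]; exact hxZ₀
    have hBone : List.Chain' G.dir [y] := List.isChain_singleton _
    have hBoneZ : ∀ u ∈ [y], u ∉ Z₀ := by
      intro u hu
      rw [List.mem_singleton] at hu
      rw [hu]; exact hyZ₀
    have hfinish : ∃ W, GWalk G Z₀ W x y := by
      by_cases hBx : ∃ v ∈ mid0, Relation.ReflTransGen G.dir v x ∧ v ∉ AnS G Z₀
      · obtain ⟨m₁, va, m₂, hmsplit, hBva, hnoBx⟩ := exists_rightmost hBx
        obtain ⟨A, hA1, hA2, hA3, hA4⟩ := mkA va (by rw [hmsplit]; simp) hBva.1 hBva.2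
        by_cases hbad2 : ∃ v ∈ m₂, v ∉ AnS G Z₀
        · obtain ⟨q₁, vb, q₂, hqsplit, hvbbad, hgood⟩ := exists_leftmost hbad2
          have hvbm : vb ∈ mid0 := by rw [hmsplit, hqsplit]; simp
          have hvby : Relation.ReflTransGen G.dir vb y := by
            rcases hmidAn vb hvbm with h | h
            · exact absurd ⟨h, hvbbad⟩ (hnoBx vb (by rw [hqsplit]; simp))
            · exact h
          obtain ⟨B, hB1, hB2, hB3, hB4⟩ := mkB vb hvbm hvby hvbbad
          have hdecomp : p = (x :: m₁) ++ (va :: q₁ ++ [vb]) ++ (q₂ ++ [y]) := by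
            rw [hmid0, hmsplit, hqsplit]; simp
          obtain ⟨hch, hmidw⟩ := mkSeg (x :: m₁) (q₂ ++ [y]) q₁ va vb hdecomp
            (fun w hw2 => not_not.1 (hgood w hw2))
          exact build_gwalk hA1 hA2 hA3 hA4 hB1 hB2 hB3 hB4 hch hmidw
        · push_neg at hbad2
          have hdecomp : p = (x :: m₁) ++ (va :: m₂ ++ [y]) ++ [] := by
            rw [hmid0, hmsplit]; simp
          obtain ⟨hch, hmidw⟩ := mkSeg (x :: m₁) [] m₂ va y hdecomp hbad2
          exact build_gwalk hA1 hA2 hA3 hA4 hBone rfl rfl hBoneZ hch hmidw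
      · push_neg at hBx
        by_cases hbad : ∃ v ∈ mid0, v ∉ AnS G Z₀
        · obtain ⟨q₁, vb, q₂, hqsplit, hvbbad, hgood⟩ := exists_leftmost hbad
          have hvbm : vb ∈ mid0 := by rw [hqsplit]; simp
          have hvby : Relation.ReflTransGen G.dir vb y := by
            rcases hmidAn vb hvbm with h | h
            · exact absurd (hBx vb hvbm h) hvbbad
            · exact h
          obtain ⟨B, hB1, hB2, hB3, hB4⟩ := mkB vb hvbm hvby hvbbad
          have hdecomp : p = [] ++ (x :: q₁ ++ [vb]) ++ (q₂ ++ [y]) := by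
            rw [hmid0, hqsplit]; simp
          obtain ⟨hch, hmidw⟩ := mkSeg [] (q₂ ++ [y]) q₁ x vb hdecomp
            (fun w hw2 => not_not.1 (hgood w hw2))
          exact build_gwalk hAone rfl rfl hAoneZ hB1 hB2 hB3 hB4 hch hmidw
        · push_neg at hbad
          have hdecomp : p = [] ++ (x :: mid0 ++ [y]) ++ [] := by rw [hmid0]; simp
          obtain ⟨hch, hmidw⟩ := mkSeg [] [] mid0 x y hdecomp hbad
          exact build_gwalk hAone rfl rfl hAoneZ hBone rfl rfl hBoneZ hch hmidw
    obtain ⟨W, hW⟩ := hfinish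
    obtain ⟨q, hq⟩ := gwalk_to_mconn hG.1 hne hxZ₀ hyZ₀ W.length W le_rfl hW
    exact hsep₀ q hq

end CausalGraph
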